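/- Let w ∈ C² on the union Q = K¹ ∪ K² of two triangles forming the parallelogram pattern: K¹ has vertices (x_i,y_j), (x_{i+1},y_j), (x_i,y_{j+1}) and K² has vertices (x_i,y_j), (x_{i+1},y_{j−1}), (x_{i+1},y_j), where h_x = x_{i+1} − x_i and the two vertical steps are equal: y_{j+1} − y_j = y_j − y_{j−1} = h_y. If v is continuous and piecewise linear on Q (linear on each triangle) with the same x-derivative constant c on all of Q, then |∫_Q (w − w^I)_x · v_x dx dy| ≤ C Σ_{l+m=2} h_x^l h_y^m ‖∂_x^{l+1} ∂_y^m w‖_{L^∞(Q)} · ‖v_x‖_{L¹(Q)} for a constant C independent of w, v, h_x, h_y. -/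

import Mathlib

/-!
Write `ψ = ∂ₓw`. Both interpolants have the x-slope `d = (w(xᵢ+hₓ, y_j) − w(xᵢ, y_j))/hₓ`, the
mean of `ψ(·, y_j)` over the common edge, so the integral is `cv · ∫_Q (ψ − d)`. Pair the
horizontal slice of `K¹` at height `y = y_j + s h_y` with the slice of `K²` at height `y − h_y`:
since the vertical steps are equal, together they cover `[xᵢ, xᵢ + hₓ]` exactly once, so `d` may be
replaced by `ψ(·, y_j)`. What is left are vertical differences of `ψ`, whose first-order parts
`s h_y m` and `(1 − s) h_y m` (with `m = ∂_y∂ₓw(xᵢ, y_j)`) are weighted by the slice lengths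
`(1 − s) hₓ` and `s hₓ` and cancel. The remainder is bounded by the oscillation of `∂_y∂ₓw` over
`Q`, i.e. by `hₓ‖∂ₓ²∂_y w‖ + h_y‖∂ₓ∂_y² w‖`; no `∂ₓ³w` term arises.
-/

open MeasureTheory Set

noncomputable def pdx (f : ℝ × ℝ → ℝ) : ℝ × ℝ → ℝ := fun p => deriv (fun t => f (t, p.2)) p.1

noncomputable def pdy (f : ℝ × ℝ → ℝ) : ℝ × ℝ → ℝ := fun p => deriv (fun t => f (p.1, t)) p.2

/-- `K¹`: the closed right triangle with vertices `(xi,yj)`, `(xi+hx,yj)`, `(xi,yj+hy)` -/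
def tri (xi yj hx hy : ℝ) : Set (ℝ × ℝ) :=
  {p | xi ≤ p.1 ∧ yj ≤ p.2 ∧ (p.1 - xi) / hx + (p.2 - yj) / hy ≤ 1}

/-- `K²`: the closed right triangle with vertices `(xi,yj)`, `(xi+hx,yj-hy)`, `(xi+hx,yj)` -/
def tri2 (xi yj hx hy : ℝ) : Set (ℝ × ℝ) :=
  {p | p.1 ≤ xi + hx ∧ p.2 ≤ yj ∧ 1 ≤ (p.1 - xi) / hx + (p.2 - (yj - hy)) / hy}

/-- affine interpolant of `w` at the vertices of `tri xi yj hx hy` -/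
noncomputable def interp (w : ℝ × ℝ → ℝ) (xi yj hx hy : ℝ) : ℝ × ℝ → ℝ :=
  fun p => w (xi, yj) * (1 - (p.1 - xi) / hx - (p.2 - yj) / hy)
    + w (xi + hx, yj) * ((p.1 - xi) / hx) + w (xi, yj + hy) * ((p.2 - yj) / hy)

/-- affine interpolant of `w` at the vertices of `tri2 xi yj hx hy` -/
noncomputable def interp2 (w : ℝ × ℝ → ℝ) (xi yj hx hy : ℝ) : ℝ × ℝ → ℝ :=
  fun p => w (xi, yj) * ((xi + hx - p.1) / hx) + w (xi + hx, yj - hy) * ((yj - p.2) / hy)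
    + w (xi + hx, yj) * (1 - (xi + hx - p.1) / hx - (yj - p.2) / hy)

lemma abs_sub_sub_mul_le {g : ℝ → ℝ} (hg : Differentiable ℝ g) {a b m M : ℝ}
    (h : ∀ t ∈ uIcc a b, |deriv g t - m| ≤ M) : |g b - g a - m * (b - a)| ≤ M * |b - a| := by
  have hderiv : ∀ t, deriv (fun s => g s - m * s) t = deriv g t - m := fun t =>
    ((hg t).hasDerivAt.sub ((hasDerivAt_id' t).const_mul m)).deriv.trans (by rw [mul_one])
  have := Convex.norm_image_sub_le_of_norm_deriv_le (f := fun s => g s - m * s)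
    (fun t _ => (hg t).sub (differentiableAt_id.const_mul m))
    (fun t ht => by simpa [hderiv] using h t ht) (convex_uIcc a b) left_mem_uIcc right_mem_uIcc
  simp only [Real.norm_eq_abs] at this
  convert this using 2
  ring

lemma abs_intervalIntegral_le {f : ℝ → ℝ} {a b C : ℝ} (h : ∀ x ∈ uIcc a b, |f x| ≤ C) :
    |∫ x in a..b, f x| ≤ C * |b - a| := by
  simpa only [Real.norm_eq_abs] using intervalIntegral.norm_integral_le_of_norm_le_const
    (f := f) fun x hx => (Real.norm_eq_abs (f x)).trans_le (h x (uIoc_subset_uIcc hx))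

lemma setIntegral_eq_intervalIntegral_intervalIntegral {f : ℝ × ℝ → ℝ} {s : Set (ℝ × ℝ)}
    {a b : ℝ} {α β : ℝ → ℝ} (hab : a ≤ b) (hαβ : ∀ y ∈ Icc a b, α y ≤ β y)
    (hs : ∀ p, p ∈ s ↔ p.2 ∈ Icc a b ∧ p.1 ∈ Icc (α p.2) (β p.2)) (hsm : MeasurableSet s)
    (hf : IntegrableOn f s) :
    ∫ p in s, f p = ∫ y in a..b, ∫ x in α y..β y, f (x, y) := by
  have hslice : ∀ y, ∫ x, s.indicator f (x, y) =
      (Icc a b).indicator (fun y => ∫ x in α y..β y, f (x, y)) y := by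
    intro y
    by_cases hy : y ∈ Icc a b
    · have : (fun x => s.indicator f (x, y)) = (Icc (α y) (β y)).indicator fun x => f (x, y) := by
        ext x
        simp only [indicator, hs, hy, true_and]
      rw [this, integral_indicator measurableSet_Icc, indicator_of_mem hy,
        intervalIntegral.integral_of_le (hαβ y hy), integral_Icc_eq_integral_Ioc]
    · have : (fun x => s.indicator f (x, y)) = fun _ => 0 := by
        ext x
        simp [indicator, hs, hy]
      simp [this, hy]
  rw [← integral_indicator hsm, Measure.volume_eq_prod,
    integral_prod_symm _ ((integrable_indicator_iff hsm).2 hf), funext hslice,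
    integral_indicator measurableSet_Icc, integral_Icc_eq_integral_Ioc,
    ← intervalIntegral.integral_of_le hab]

section PartialDerivatives

variable {f : ℝ × ℝ → ℝ}

lemma hasDerivAt_pdx (hf : Differentiable ℝ f) (x y : ℝ) :
    HasDerivAt (fun t => f (t, y)) (pdx f (x, y)) x :=
  (hf.comp (differentiable_id.prodMk (differentiable_const y)) x).hasDerivAt

lemma pdx_eq_fderiv (hf : Differentiable ℝ f) (p : ℝ × ℝ) : pdx f p = fderiv ℝ f p (1, 0) :=
  ((hf p).hasFDerivAt.comp_hasDerivAt p.1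
    ((hasDerivAt_id p.1).prodMk (hasDerivAt_const p.1 p.2))).deriv

lemma pdy_eq_fderiv (hf : Differentiable ℝ f) (p : ℝ × ℝ) : pdy f p = fderiv ℝ f p (0, 1) :=
  ((hf p).hasFDerivAt.comp_hasDerivAt p.2
    ((hasDerivAt_const p.2 p.1).prodMk (hasDerivAt_id p.2))).deriv

lemma ContDiff.pdx {n : WithTop ℕ∞} (hf : ContDiff ℝ (n + 1) f) : ContDiff ℝ n (pdx f) := by
  rw [funext (pdx_eq_fderiv (hf.differentiable (by simp)))]
  exact (hf.fderiv_right le_rfl).clm_apply contDiff_const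

lemma ContDiff.pdy {n : WithTop ℕ∞} (hf : ContDiff ℝ (n + 1) f) : ContDiff ℝ n (pdy f) := by
  rw [funext (pdy_eq_fderiv (hf.differentiable (by simp)))]
  exact (hf.fderiv_right le_rfl).clm_apply contDiff_const

lemma pdx_pdy_eq_pdy_pdx (hf : ContDiff ℝ 2 f) : pdx (pdy f) = pdy (pdx f) := by
  have hf1 : Differentiable ℝ f := hf.differentiable two_ne_zero
  have hf' : Differentiable ℝ (fderiv ℝ f) :=
    (hf.fderiv_right (m := 1) le_rfl).differentiable one_ne_zero
  have hpart : ∀ u : ℝ × ℝ, Differentiable ℝ fun q => fderiv ℝ f q u :=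
    fun u => hf'.clm_apply (differentiable_const u)
  have hsecond : ∀ p u v, fderiv ℝ (fun q => fderiv ℝ f q u) p v = fderiv ℝ (fderiv ℝ f) p v u := by
    intro p u v
    rw [fderiv_clm_apply (hf' p) (differentiableAt_const u)]
    simp
  ext p
  rw [funext (pdy_eq_fderiv hf1), funext (pdx_eq_fderiv hf1), pdx_eq_fderiv (hpart _),
    pdy_eq_fderiv (hpart _), hsecond, hsecond]
  exact (hf.contDiffAt.isSymmSndFDerivAt (by simp)) _ _

lemma integral_pdx (hf : Differentiable ℝ f) (hf' : Continuous (pdx f)) (a b y : ℝ) :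
    ∫ t in a..b, pdx f (t, y) = f (b, y) - f (a, y) :=
  intervalIntegral.integral_eq_sub_of_hasDerivAt (fun t _ => hasDerivAt_pdx hf t y)
    ((hf'.comp (continuous_id.prodMk continuous_const)).intervalIntegrable a b)

lemma abs_sub_le_of_abs_pdx_le (hf : Differentiable ℝ f) {a b y M : ℝ}
    (h : ∀ t ∈ uIcc a b, |pdx f (t, y)| ≤ M) : |f (b, y) - f (a, y)| ≤ M * |b - a| := by
  simpa using abs_sub_sub_mul_le (hf.comp (differentiable_id.prodMk (differentiable_const y)))
    (m := 0) fun t ht => by rw [sub_zero]; exact h t ht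

lemma abs_sub_sub_mul_le_of_abs_pdy_sub_le (hf : Differentiable ℝ f) {x a b m M : ℝ}
    (h : ∀ t ∈ uIcc a b, |pdy f (x, t) - m| ≤ M) :
    |f (x, b) - f (x, a) - m * (b - a)| ≤ M * |b - a| :=
  abs_sub_sub_mul_le (hf.comp ((differentiable_const x).prodMk differentiable_id)) h

lemma abs_sub_le_of_abs_pdy_le (hf : Differentiable ℝ f) {x a b M : ℝ}
    (h : ∀ t ∈ uIcc a b, |pdy f (x, t)| ≤ M) : |f (x, b) - f (x, a)| ≤ M * |b - a| := by
  simpa using abs_sub_sub_mul_le_of_abs_pdy_sub_le hf (m := 0)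
    fun t ht => by rw [sub_zero]; exact h t ht

lemma pdx_sub_of_affine {g : ℝ × ℝ → ℝ} (hf : Differentiable ℝ f) {a : ℝ}
    (hg : ∀ x y, g (x, y) = a * x + g (0, y)) (p : ℝ × ℝ) :
    pdx (fun q => f q - g q) p = pdx f p - a := by
  have hslice : HasDerivAt (fun t => g (t, p.2)) a p.1 := by
    rw [funext fun t => hg t p.2]
    simpa using ((hasDerivAt_id p.1).const_mul a).add_const (g (0, p.2))
  exact ((hasDerivAt_pdx hf p.1 p.2).sub hslice).deriv

end PartialDerivatives

/-- The hypotenuse of `tri xi yj hx hy` is `x = hypotenuseX xi yj hx hy y`; that of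
`tri2 xi yj hx hy` is the same line shifted down by `hy`. -/
noncomputable def hypotenuseX (xi yj hx hy y : ℝ) : ℝ := xi + hx * (1 - (y - yj) / hy)

section Triangles

variable {xi yj hx hy : ℝ}

lemma continuous_hypotenuseX : Continuous (hypotenuseX xi yj hx hy) := by
  unfold hypotenuseX
  fun_prop

lemma hypotenuseX_antitone (hhx : 0 ≤ hx) (hhy : 0 ≤ hy) : Antitone (hypotenuseX xi yj hx hy) :=
  fun a b hab => by
    unfold hypotenuseX
    gcongr

@[simp] lemma hypotenuseX_bottom : hypotenuseX xi yj hx hy yj = xi + hx := by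
  simp [hypotenuseX]

@[simp] lemma hypotenuseX_top (hhy : hy ≠ 0) : hypotenuseX xi yj hx hy (yj + hy) = xi := by
  simp [hypotenuseX, hhy]

lemma hypotenuseX_mem_Icc (hhx : 0 ≤ hx) (hhy : 0 < hy) {y : ℝ} (hyQ : y ∈ Icc yj (yj + hy)) :
    hypotenuseX xi yj hx hy y ∈ Icc xi (xi + hx) := by
  have hanti := hypotenuseX_antitone (xi := xi) (yj := yj) hhx hhy.le
  simpa [hhy.ne'] using And.symm ⟨hanti hyQ.1, hanti hyQ.2⟩

lemma mem_tri_iff (hhx : 0 < hx) (hhy : 0 < hy) (p : ℝ × ℝ) :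
    p ∈ tri xi yj hx hy ↔
      p.2 ∈ Icc yj (yj + hy) ∧ p.1 ∈ Icc xi (hypotenuseX xi yj hx hy p.2) := by
  obtain ⟨x, y⟩ := p
  have hhyp : (x - xi) / hx + (y - yj) / hy ≤ 1 ↔ x ≤ hypotenuseX xi yj hx hy y := by
    rw [← le_sub_iff_add_le, div_le_iff₀ hhx, hypotenuseX]
    constructor <;> intro <;> linarith
  have htop : xi ≤ x → (x - xi) / hx + (y - yj) / hy ≤ 1 → y ≤ yj + hy := fun hx' h => by
    have : (y - yj) / hy ≤ 1 := by linarith [div_nonneg (sub_nonneg.2 hx') hhx.le]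
    linarith [(div_le_one hhy).1 this]
  simp only [tri, mem_ofPred_eq, mem_Icc, ← hhyp]
  exact ⟨fun ⟨h1, h2, h3⟩ => ⟨⟨h2, htop h1 h3⟩, h1, h3⟩, fun ⟨⟨h2, _⟩, h1, h3⟩ => ⟨h1, h2, h3⟩⟩

lemma mem_tri2_iff (hhx : 0 < hx) (hhy : 0 < hy) (p : ℝ × ℝ) :
    p ∈ tri2 xi yj hx hy ↔
      p.2 ∈ Icc (yj - hy) yj ∧ p.1 ∈ Icc (hypotenuseX xi yj hx hy (p.2 + hy)) (xi + hx) := by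
  obtain ⟨x, y⟩ := p
  have hhyp : 1 ≤ (x - xi) / hx + (y - (yj - hy)) / hy ↔ hypotenuseX xi yj hx hy (y + hy) ≤ x := by
    rw [← sub_le_iff_le_add, le_div_iff₀ hhx, hypotenuseX, show y + hy - yj = y - (yj - hy) by ring]
    constructor <;> intro <;> linarith
  have hbot : x ≤ xi + hx → 1 ≤ (x - xi) / hx + (y - (yj - hy)) / hy → yj - hy ≤ y := by
    intro hx' h
    have : 0 ≤ (y - (yj - hy)) / hy := by linarith [(div_le_one hhx).2 (by linarith : x - xi ≤ hx)]
    linarith [(le_div_iff₀ hhy).1 this]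
  simp only [tri2, mem_ofPred_eq, mem_Icc, ← hhyp]
  exact ⟨fun ⟨h1, h2, h3⟩ => ⟨⟨hbot h1 h3, h2⟩, h3, h1⟩, fun ⟨⟨_, h2⟩, h3, h1⟩ => ⟨h1, h2, h3⟩⟩

lemma isClosed_tri : IsClosed (tri xi yj hx hy) :=
  (isClosed_le continuous_const continuous_fst).inter
    ((isClosed_le continuous_const continuous_snd).inter
      (isClosed_le (by fun_prop : Continuous fun p : ℝ × ℝ => (p.1 - xi) / hx + (p.2 - yj) / hy)
        continuous_const))

lemma isClosed_tri2 : IsClosed (tri2 xi yj hx hy) :=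
  (isClosed_le continuous_fst continuous_const).inter
    ((isClosed_le continuous_snd continuous_const).inter (isClosed_le continuous_const
      (by fun_prop : Continuous fun p : ℝ × ℝ => (p.1 - xi) / hx + (p.2 - (yj - hy)) / hy)))

lemma isCompact_tri (hhx : 0 < hx) (hhy : 0 < hy) : IsCompact (tri xi yj hx hy) := by
  refine (isCompact_Icc (a := (xi, yj)) (b := (xi + hx, yj + hy))).of_isClosed_subset isClosed_tri
    fun p hp => ?_
  obtain ⟨hp2, hp1, hp1'⟩ := (mem_tri_iff hhx hhy p).1 hp
  exact ⟨⟨hp1, hp2.1⟩, hp1'.trans (hypotenuseX_mem_Icc hhx.le hhy hp2).2, hp2.2⟩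

lemma isCompact_tri2 (hhx : 0 < hx) (hhy : 0 < hy) : IsCompact (tri2 xi yj hx hy) := by
  refine (isCompact_Icc (a := (xi, yj - hy)) (b := (xi + hx, yj))).of_isClosed_subset isClosed_tri2
    fun p hp => ?_
  obtain ⟨hp2, hp1, hp1'⟩ := (mem_tri2_iff hhx hhy p).1 hp
  have hshift : p.2 + hy ∈ Icc yj (yj + hy) := ⟨by linarith [hp2.1], by linarith [hp2.2]⟩
  exact ⟨⟨(hypotenuseX_mem_Icc hhx.le hhy hshift).1.trans hp1, hp2.1⟩, hp1', hp2.2⟩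

variable {F : ℝ × ℝ → ℝ}

lemma integral_tri (hhx : 0 < hx) (hhy : 0 < hy) (hF : Continuous F) :
    ∫ p in tri xi yj hx hy, F p =
      ∫ y in yj..yj + hy, ∫ x in xi..hypotenuseX xi yj hx hy y, F (x, y) :=
  setIntegral_eq_intervalIntegral_intervalIntegral (by linarith)
    (fun _ hyQ => (hypotenuseX_mem_Icc hhx.le hhy hyQ).1) (mem_tri_iff hhx hhy)
    isClosed_tri.measurableSet (hF.continuousOn.integrableOn_compact (isCompact_tri hhx hhy))

lemma integral_tri2 (hhx : 0 < hx) (hhy : 0 < hy) (hF : Continuous F) :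
    ∫ p in tri2 xi yj hx hy, F p =
      ∫ y in yj..yj + hy, ∫ x in hypotenuseX xi yj hx hy y..xi + hx, F (x, y - hy) := by
  rw [setIntegral_eq_intervalIntegral_intervalIntegral (a := yj - hy) (b := yj) (by linarith)
    (fun y hyQ => (hypotenuseX_mem_Icc hhx.le hhy (y := y + hy)
      ⟨by linarith [hyQ.1], by linarith [hyQ.2]⟩).2) (mem_tri2_iff hhx hhy)
    isClosed_tri2.measurableSet (hF.continuousOn.integrableOn_compact (isCompact_tri2 hhx hhy))]
  simpa using (intervalIntegral.integral_comp_sub_right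
    (a := yj) (b := yj + hy)
    (fun y => ∫ x in hypotenuseX xi yj hx hy (y + hy)..xi + hx, F (x, y)) hy).symm

end Triangles

section Estimates

variable {xi yj hx hy : ℝ}

lemma abs_sub_le_of_abs_pdx_le_of_abs_pdy_le {μ : ℝ × ℝ → ℝ} (hμ : Differentiable ℝ μ)
    (hhx : 0 < hx) (hhy : 0 < hy) {A B : ℝ}
    (hA : ∀ p ∈ tri xi yj hx hy ∪ tri2 xi yj hx hy, |pdx μ p| ≤ A)
    (hB : ∀ p ∈ tri xi yj hx hy ∪ tri2 xi yj hx hy, |pdy μ p| ≤ B)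
    {p : ℝ × ℝ} (hp : p ∈ tri xi yj hx hy ∪ tri2 xi yj hx hy) :
    |μ p - μ (xi, yj)| ≤ hx * A + hy * B := by
  have hanti := hypotenuseX_antitone (xi := xi) (yj := yj) hhx.le hhy.le
  have hA0 : 0 ≤ A := (abs_nonneg _).trans (hA p hp)
  have hB0 : 0 ≤ B := (abs_nonneg _).trans (hB p hp)
  obtain ⟨t, σ⟩ := p
  rcases hp with hp | hp
  · obtain ⟨hσ, ht⟩ := (mem_tri_iff hhx hhy _).1 hp
    have hhoriz : |μ (t, σ) - μ (xi, σ)| ≤ A * |t - xi| :=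
      abs_sub_le_of_abs_pdx_le hμ fun τ hτ => hA _ <| Or.inl <| (mem_tri_iff hhx hhy _).2
        ⟨hσ, by rw [uIcc_of_le ht.1] at hτ; exact ⟨hτ.1, hτ.2.trans ht.2⟩⟩
    have hvert : |μ (xi, σ) - μ (xi, yj)| ≤ B * |σ - yj| := by
      refine abs_sub_le_of_abs_pdy_le hμ fun s hs => hB _ <| Or.inl <| (mem_tri_iff hhx hhy _).2 ?_
      rw [uIcc_of_le hσ.1] at hs
      refine ⟨⟨hs.1, hs.2.trans hσ.2⟩, le_rfl, ?_⟩
      simpa [hhy.ne'] using hanti (hs.2.trans hσ.2)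
    calc |μ (t, σ) - μ (xi, yj)| ≤ |μ (t, σ) - μ (xi, σ)| + |μ (xi, σ) - μ (xi, yj)| :=
          abs_sub_le _ _ _
      _ ≤ A * |t - xi| + B * |σ - yj| := add_le_add hhoriz hvert
      _ ≤ hx * A + hy * B := by
        have := (hypotenuseX_mem_Icc (xi := xi) hhx.le hhy hσ).2
        rw [abs_of_nonneg (sub_nonneg.2 ht.1), abs_of_nonneg (sub_nonneg.2 hσ.1)]
        nlinarith [ht.2, hσ.2]
  · obtain ⟨hσ, ht⟩ := (mem_tri2_iff hhx hhy _).1 hp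
    have hσ' : σ + hy ∈ Icc yj (yj + hy) := ⟨by linarith [hσ.1], by linarith [hσ.2]⟩
    have hxt : xi ≤ t := (hypotenuseX_mem_Icc hhx.le hhy hσ').1.trans ht.1
    have hvert : |μ (t, yj) - μ (t, σ)| ≤ B * |yj - σ| := by
      refine abs_sub_le_of_abs_pdy_le hμ fun s hs => hB _ <| Or.inr <| (mem_tri2_iff hhx hhy _).2 ?_
      rw [uIcc_of_le hσ.2] at hs
      exact ⟨⟨hσ.1.trans hs.1, hs.2⟩, (hanti (by linarith [hs.1])).trans ht.1, ht.2⟩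
    have hhoriz : |μ (t, yj) - μ (xi, yj)| ≤ A * |t - xi| := by
      refine abs_sub_le_of_abs_pdx_le hμ fun τ hτ => hA _ <| Or.inr <| (mem_tri2_iff hhx hhy _).2 ?_
      rw [uIcc_of_le hxt] at hτ
      exact ⟨⟨by linarith, le_rfl⟩, by simpa [hhy.ne'] using hτ.1, hτ.2.trans ht.2⟩
    calc |μ (t, σ) - μ (xi, yj)| ≤ |μ (t, yj) - μ (t, σ)| + |μ (t, yj) - μ (xi, yj)| := by
          rw [abs_sub_comm (μ (t, yj))]; exact abs_sub_le _ _ _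
      _ ≤ B * |yj - σ| + A * |t - xi| := add_le_add hvert hhoriz
      _ ≤ hx * A + hy * B := by
        rw [abs_of_nonneg (sub_nonneg.2 hσ.2), abs_of_nonneg (sub_nonneg.2 hxt)]
        nlinarith [ht.2, hσ.1]

variable {ψ : ℝ × ℝ → ℝ} {d m M : ℝ}

lemma abs_integral_slice_add_integral_slice_le (hψ : Differentiable ℝ ψ) (hhx : 0 < hx)
    (hhy : 0 < hy) (hd : ∫ t in xi..xi + hx, ψ (t, yj) = hx * d)
    (hM : ∀ p ∈ tri xi yj hx hy ∪ tri2 xi yj hx hy, |pdy ψ p - m| ≤ M)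
    {y : ℝ} (hyQ : y ∈ Icc yj (yj + hy)) :
    |(∫ x in xi..hypotenuseX xi yj hx hy y, (ψ (x, y) - d)) +
      ∫ x in hypotenuseX xi yj hx hy y..xi + hx, (ψ (x, y - hy) - d)| ≤ 2 * M * hx * hy := by
  have hanti := hypotenuseX_antitone (xi := xi) (yj := yj) hhx.le hhy.le
  set e := hypotenuseX xi yj hx hy y with he_def
  have he : e ∈ Icc xi (xi + hx) := hypotenuseX_mem_Icc hhx.le hhy hyQ
  have hM0 : 0 ≤ M := (abs_nonneg _).trans <| hM (xi, yj) <| Or.inl <|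
    (mem_tri_iff hhx hhy _).2 ⟨⟨le_rfl, by linarith⟩, le_rfl, by simp [hhx.le]⟩
  have hint : ∀ σ a b, IntervalIntegrable (fun t => ψ (t, σ)) volume a b := fun σ a b =>
    (hψ.continuous.comp (continuous_id.prodMk continuous_const)).intervalIntegrable a b
  have hup : ∀ t ∈ uIcc xi e, |ψ (t, y) - ψ (t, yj) - m * (y - yj)| ≤ M * hy := by
    intro t ht
    rw [uIcc_of_le he.1] at ht
    refine (abs_sub_sub_mul_le_of_abs_pdy_sub_le hψ fun s hs => hM _ <| Or.inl <|
      (mem_tri_iff hhx hhy _).2 ?_).trans ?_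
    · rw [uIcc_of_le hyQ.1] at hs
      exact ⟨⟨hs.1, hs.2.trans hyQ.2⟩, ht.1, ht.2.trans (hanti hs.2)⟩
    · rw [abs_of_nonneg (sub_nonneg.2 hyQ.1)]
      exact mul_le_mul_of_nonneg_left (by linarith [hyQ.2]) hM0
  have hdown : ∀ t ∈ uIcc e (xi + hx),
      |ψ (t, yj) - ψ (t, y - hy) - m * (yj - (y - hy))| ≤ M * hy := by
    intro t ht
    rw [uIcc_of_le he.2] at ht
    refine (abs_sub_sub_mul_le_of_abs_pdy_sub_le hψ fun s hs => hM _ <| Or.inr <|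
      (mem_tri2_iff hhx hhy _).2 ?_).trans ?_
    · rw [uIcc_of_le (by linarith [hyQ.2])] at hs
      exact ⟨⟨by linarith [hs.1, hyQ.1], hs.2⟩, (hanti (by linarith [hs.1])).trans ht.1, ht.2⟩
    · rw [abs_of_nonneg (by linarith [hyQ.2])]
      exact mul_le_mul_of_nonneg_left (by linarith [hyQ.1]) hM0
  have hcancel : (e - xi) * (y - yj) = (xi + hx - e) * (yj - (y - hy)) := by
    simp only [he_def, hypotenuseX]
    field_simp
    ring
  have hsplit : (∫ x in xi..e, (ψ (x, y) - d)) + ∫ x in e..xi + hx, (ψ (x, y - hy) - d) =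
      (∫ x in xi..e, (ψ (x, y) - ψ (x, yj) - m * (y - yj))) -
        ∫ x in e..xi + hx, (ψ (x, yj) - ψ (x, y - hy) - m * (yj - (y - hy))) := by
    rw [← intervalIntegral.integral_add_adjacent_intervals (hint yj xi e) (hint yj e _)] at hd
    simp only [intervalIntegral.integral_sub (hint _ _ _) intervalIntegrable_const,
      intervalIntegral.integral_sub ((hint _ _ _).sub (hint _ _ _)) intervalIntegrable_const,
      intervalIntegral.integral_sub (hint _ _ _) (hint _ _ _), intervalIntegral.integral_const,
      smul_eq_mul]
    linear_combination hd + m * hcancel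
  rw [hsplit]
  have hlen : |e - xi| + |xi + hx - e| = hx := by
    rw [abs_of_nonneg (by linarith [he.1]), abs_of_nonneg (by linarith [he.2])]
    ring
  calc _ ≤ M * hy * |e - xi| + M * hy * |xi + hx - e| :=
        (abs_sub _ _).trans <|
          add_le_add (abs_intervalIntegral_le hup) (abs_intervalIntegral_le hdown)
    _ ≤ 2 * M * hx * hy := by
      rw [← mul_add, hlen]
      nlinarith [mul_nonneg (mul_nonneg hM0 hhy.le) hhx.le]

lemma abs_integral_tri_add_integral_tri2_le (hψ : Differentiable ℝ ψ) (hhx : 0 < hx)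
    (hhy : 0 < hy) (hd : ∫ t in xi..xi + hx, ψ (t, yj) = hx * d)
    (hM : ∀ p ∈ tri xi yj hx hy ∪ tri2 xi yj hx hy, |pdy ψ p - m| ≤ M) :
    |(∫ p in tri xi yj hx hy, (ψ p - d)) + ∫ p in tri2 xi yj hx hy, (ψ p - d)| ≤
      2 * M * hx * hy ^ 2 := by
  have hF : Continuous fun p => ψ p - d := hψ.continuous.sub continuous_const
  have hslice1 : Continuous fun y => ∫ x in xi..hypotenuseX xi yj hx hy y, (ψ (x, y) - d) :=
    intervalIntegral.continuous_parametric_intervalIntegral_of_continuous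
      (f := fun y x => ψ (x, y) - d) (hF.comp continuous_swap) continuous_hypotenuseX
  have hslice2 : Continuous fun y =>
      ∫ x in hypotenuseX xi yj hx hy y..xi + hx, (ψ (x, y - hy) - d) := by
    simp_rw [intervalIntegral.integral_symm (xi + hx)]
    exact (intervalIntegral.continuous_parametric_intervalIntegral_of_continuous
      (f := fun y x => ψ (x, y - hy) - d)
      (hF.comp (continuous_snd.prodMk (continuous_fst.sub continuous_const)))
      continuous_hypotenuseX).neg
  rw [integral_tri hhx hhy hF, integral_tri2 hhx hhy hF,
    ← intervalIntegral.integral_add (hslice1.intervalIntegrable _ _)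
      (hslice2.intervalIntegrable _ _)]
  calc _ ≤ 2 * M * hx * hy * |yj + hy - yj| :=
        abs_intervalIntegral_le fun y hy =>
          abs_integral_slice_add_integral_slice_le hψ hhx hhy hd hM
            (by rwa [uIcc_of_le (by linarith)] at hy)
    _ = 2 * M * hx * hy ^ 2 := by rw [add_sub_cancel_left, abs_of_pos hhy]; ring

end Estimates

section Interpolation

variable {w : ℝ × ℝ → ℝ} {xi yj hx hy : ℝ}

lemma pdx_sub_interp (hw : Differentiable ℝ w) (p : ℝ × ℝ) :
    pdx (fun q => w q - interp w xi yj hx hy q) p =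
      pdx w p - (w (xi + hx, yj) - w (xi, yj)) / hx :=
  pdx_sub_of_affine hw (fun x y => by simp only [interp]; ring) p

lemma pdx_sub_interp2 (hw : Differentiable ℝ w) (p : ℝ × ℝ) :
    pdx (fun q => w q - interp2 w xi yj hx hy q) p =
      pdx w p - (w (xi + hx, yj) - w (xi, yj)) / hx :=
  pdx_sub_of_affine hw (fun x y => by simp only [interp2]; ring) p

end Interpolation

/-- On `Q = K¹ ∪ K²` (equal vertical steps), for a continuous piecewise linear `v`
whose x-derivative is the single constant `cv` on `Q`,
`|∫_Q (w - wᴵ)_x v_x| ≤ C Σ_{l+m=2} hx^l hy^m ‖∂_x^{l+1}∂_y^m w‖_{L^∞(Q)} ‖v_x‖_{L¹(Q)}`,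
where `‖v_x‖_{L¹(Q)} = |cv|·hx·hy`. -/
theorem stmt2 :
    ∃ C > 0, ∀ (w v : ℝ × ℝ → ℝ) (xi yj hx hy cv b1 d1 b2 d2 Mxxx Mxxy Mxyy : ℝ),
      0 < hx → 0 < hy → ContDiff ℝ 3 w → Continuous v →
      (∀ p ∈ tri xi yj hx hy, v p = cv * p.1 + b1 * p.2 + d1) →
      (∀ p ∈ tri2 xi yj hx hy, v p = cv * p.1 + b2 * p.2 + d2) →
      (∀ p ∈ tri xi yj hx hy ∪ tri2 xi yj hx hy, |pdx (pdx (pdx w)) p| ≤ Mxxx) →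
      (∀ p ∈ tri xi yj hx hy ∪ tri2 xi yj hx hy, |pdy (pdx (pdx w)) p| ≤ Mxxy) →
      (∀ p ∈ tri xi yj hx hy ∪ tri2 xi yj hx hy, |pdy (pdy (pdx w)) p| ≤ Mxyy) →
      |(∫ p in tri xi yj hx hy, pdx (fun q => w q - interp w xi yj hx hy q) p * cv)
        + ∫ p in tri2 xi yj hx hy, pdx (fun q => w q - interp2 w xi yj hx hy q) p * cv|
      ≤ C * (hx ^ 2 * Mxxx + hx * hy * Mxxy + hy ^ 2 * Mxyy) * (|cv| * (hx * hy)) := by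
  refine ⟨2, two_pos, fun w v xi yj hx hy cv b1 d1 b2 d2 Mxxx Mxxy Mxyy hhx hhy hw _ _ _
    hMxxx hMxxy hMxyy => ?_⟩
  have hw1 : Differentiable ℝ w := hw.differentiable (by norm_num)
  have hψ : ContDiff ℝ 2 (pdx w) := ContDiff.pdx (n := 2) hw
  have hμ : ContDiff ℝ 1 (pdy (pdx w)) := ContDiff.pdy (n := 1) hψ
  have hQ : (xi, yj) ∈ tri xi yj hx hy ∪ tri2 xi yj hx hy :=
    Or.inl ⟨le_rfl, le_rfl, by simp⟩
  have hestimate := abs_integral_tri_add_integral_tri2_le (hψ.differentiable two_ne_zero) hhx hhy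
    (d := (w (xi + hx, yj) - w (xi, yj)) / hx)
    (by rw [integral_pdx hw1 hψ.continuous, mul_div_cancel₀ _ hhx.ne'])
    fun p hp => abs_sub_le_of_abs_pdx_le_of_abs_pdy_le (hμ.differentiable one_ne_zero) hhx hhy
      (fun q hq => by rw [pdx_pdy_eq_pdy_pdx hψ]; exact hMxxy q hq) hMxyy hp
  have hMxxx0 : 0 ≤ Mxxx := (abs_nonneg _).trans (hMxxx _ hQ)
  simp_rw [pdx_sub_interp hw1, pdx_sub_interp2 hw1, integral_mul_const, ← add_mul, abs_mul]
  calc _ ≤ 2 * (hx * Mxxy + hy * Mxyy) * hx * hy ^ 2 * |cv| :=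
        mul_le_mul_of_nonneg_right hestimate (abs_nonneg cv)
    _ ≤ _ := by
      have : 0 ≤ hx ^ 2 * Mxxx * (|cv| * (hx * hy)) := by positivity
      linarith
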